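/- arXiv:1809.00714 — 2 statements merged into one kernel-verified Lean document; each statement's English description precedes it below -/
import Mathlib

section
/- Let N ≥ 2, p ∈ [2,∞), q = (N+2)/(N+p), ε > 0. Let A be a symmetric N×N real matrix, b ∈ ℝ^N, c ∈ ℝ, and let φ(y) = c + bᵀy + (1/2)yᵀAy. Then for every x ∈ ℝ^N, 2(N+p)·(M^ε φ(x) − φ(x)) = ε²·(tr A + (p−2)·λ_max(A)), i.e. C_{N,p}(M^ε φ(x) − φ(x))/ε² = D_p φ with C_{N,p} = 2(N+p), where λ_max(A) = sup_{|ξ|=1} ξᵀAξ is the largest eigenvalue of A. -/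
open MeasureTheory Metric Set
open scoped ENNReal NNReal Classical

noncomputable section

abbrev EucN (N : ℕ) := EuclideanSpace ℝ (Fin N)

variable {N : ℕ}

/-- The directional mean value operator `M^ε_ξ v (x)`. -/
def mveOp (q ε : ℝ) (v : EucN N → ℝ) (ξ x : EucN N) : ℝ :=
  q * (⨍ y in ball x ε, v y) + (1 - q) * ((v (x + ε • ξ) + v (x - ε • ξ)) / 2)

/-- The mean value operator `M^ε v (x) = sup_{|ξ|=1} M^ε_ξ v (x)`. -/
def mvOp (q ε : ℝ) (v : EucN N → ℝ) (x : EucN N) : ℝ :=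
  ⨆ ξ : sphere (0 : EucN N) 1, mveOp q ε v (ξ : EucN N) x

/-- `λ_max(A) = sup_{|ξ|=1} ξᵀAξ`, the largest eigenvalue of a symmetric matrix `A`. -/
def lamMax (A : Matrix (Fin N) (Fin N) ℝ) : ℝ :=
  ⨆ ξ : sphere (0 : EucN N) 1, ∑ i, ∑ j, (ξ : EucN N) i * A i j * (ξ : EucN N) j

/-!
The ball `B_ε(0)` is invariant under `z ↦ -z`, so the ball average of `φ (x + ·)` equals that of
its even part `φ x + ½ zᵀAz`. The second moments of the ball are
`∫_{B_ε} z_i z_j = δ_ij ε²/(N+2) |B_ε|`: reflecting one coordinate kills the off-diagonal ones,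
swapping two coordinates equalises the diagonal ones, and their sum is the radial integral of
`‖z‖²`. Hence `M^ε_ξ φ(x) = φ(x) + q ε² tr A / (2(N+2)) + (1-q) ε² ξᵀAξ / 2`, which is affine and,
as `q ≤ 1`, nondecreasing in `ξᵀAξ`; so the supremum over `ξ` replaces `ξᵀAξ` by `λ_max(A)`, and
`q = (N+2)/(N+p)` makes the constants combine.
-/

section Ball

variable {E : Type*} [NormedAddCommGroup E] [MeasurableSpace E] [BorelSpace E]

theorem Continuous.integrableOn_ball [ProperSpace E] {F : Type*} [NormedAddCommGroup F]
    {μ : Measure E} [IsLocallyFiniteMeasure μ] {f : E → F} (hf : Continuous f) (x : E) (r : ℝ) :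
    IntegrableOn f (ball x r) μ :=
  (hf.locallyIntegrable.integrableOn_isCompact (isCompact_closedBall x r)).mono_set
    ball_subset_closedBall

theorem setAverage_ball_eq_setAverage_ball_zero [NormedSpace ℝ E] (μ : Measure E)
    [μ.IsAddHaarMeasure] {F : Type*} [NormedAddCommGroup F] [NormedSpace ℝ F] (f : E → F)
    (x : E) (ε : ℝ) :
    ⨍ y in ball x ε, f y ∂μ = ⨍ z in ball 0 ε, f (x + z) ∂μ := by
  have hpre : (x + ·) ⁻¹' ball x ε = ball 0 ε := by
    ext z
    simp [dist_eq_norm]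
  rw [setAverage_eq, setAverage_eq, measureReal_def, measureReal_def,
    μ.addHaar_ball_center, ← hpre,
    (measurePreserving_add_left μ x).setIntegral_preimage_emb
      (Homeomorph.addLeft x).measurableEmbedding]

theorem setIntegral_ball_norm_sq [NormedSpace ℝ E] [FiniteDimensional ℝ E] [Nontrivial E]
    (μ : Measure E) [μ.IsAddHaarMeasure] {ε : ℝ} (hε : 0 < ε) :
    ∫ z in ball 0 ε, ‖z‖ ^ 2 ∂μ
      = Module.finrank ℝ E / (Module.finrank ℝ E + 2) * ε ^ 2 * μ.real (ball 0 ε) := by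
  set d := Module.finrank ℝ E
  have hd : 1 ≤ d := Module.finrank_pos
  have hball : ∫ z in ball 0 ε, ‖z‖ ^ 2 ∂μ = ∫ z, (Iio ε).indicator (· ^ 2) ‖z‖ ∂μ := by
    rw [← integral_indicator measurableSet_ball]
    congr 1 with z
    simp [indicator]
  have hradial : ∫ r in Ioi (0 : ℝ), r ^ (d - 1) • (Iio ε).indicator (· ^ 2) r
      = ε ^ (d + 2) / (d + 2) := by
    have hpow : ∀ r : ℝ, r ^ (d - 1) • (Iio ε).indicator (· ^ 2) r
        = (Iio ε).indicator (· ^ (d + 1)) r := by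
      intro r
      by_cases hr : r ∈ Iio ε
      · simp only [indicator_of_mem hr, smul_eq_mul, ← pow_add]
        congr 1
        omega
      · simp [indicator_of_notMem hr]
    simp_rw [hpow]
    rw [setIntegral_indicator measurableSet_Iio, Ioi_inter_Iio, ← integral_Ioc_eq_integral_Ioo,
      ← intervalIntegral.integral_of_le hε.le, integral_pow]
    push_cast
    ring_nf
  rw [hball, integral_fun_norm_addHaar, hradial, measureReal_def, measureReal_def,
    μ.addHaar_ball 0 hε.le, ENNReal.toReal_mul, ENNReal.toReal_ofReal (by positivity),
    nsmul_eq_mul, smul_eq_mul]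
  field_simp
  ring

end Ball

section EuclideanMoments

variable {ι : Type*} [Fintype ι]

theorem setIntegral_ball_comp_linearIsometryEquiv {F : Type*} [NormedAddCommGroup F]
    [NormedSpace ℝ F] (e : EuclideanSpace ℝ ι ≃ₗᵢ[ℝ] EuclideanSpace ℝ ι)
    (f : EuclideanSpace ℝ ι → F) (ε : ℝ) :
    ∫ z in ball 0 ε, f (e z) = ∫ z in ball 0 ε, f z := by
  have hpre : e ⁻¹' ball 0 ε = ball 0 ε := by
    ext z
    simp
  conv_lhs => rw [← hpre]
  exact e.measurePreserving.setIntegral_preimage_emb e.toHomeomorph.measurableEmbedding f _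

theorem setIntegral_ball_coord_mul_coord_of_ne {i j : ι} (hij : i ≠ j) (ε : ℝ) :
    ∫ z in ball (0 : EuclideanSpace ℝ ι) ε, z i * z j = 0 := by
  classical
  let e : EuclideanSpace ℝ ι ≃ₗᵢ[ℝ] EuclideanSpace ℝ ι := LinearIsometryEquiv.piLpCongrRight 2
    fun k => if k = i then LinearIsometryEquiv.neg ℝ else LinearIsometryEquiv.refl ℝ ℝ
  have he : ∀ z, e z i * e z j = -(z i * z j) := fun z => by
    simp [e, LinearIsometryEquiv.piLpCongrRight_apply, hij.symm]
  have h := setIntegral_ball_comp_linearIsometryEquiv e (fun z => z i * z j) ε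
  simp only [he, integral_neg] at h
  linarith

theorem setIntegral_ball_coord_sq_eq (i j : ι) (ε : ℝ) :
    ∫ z in ball (0 : EuclideanSpace ℝ ι) ε, z i ^ 2
      = ∫ z in ball (0 : EuclideanSpace ℝ ι) ε, z j ^ 2 := by
  classical
  let e : EuclideanSpace ℝ ι ≃ₗᵢ[ℝ] EuclideanSpace ℝ ι :=
    LinearIsometryEquiv.piLpCongrLeft 2 ℝ ℝ (Equiv.swap i j)
  have he : ∀ z, e z j = z i := fun z => by
    simp [e, LinearIsometryEquiv.piLpCongrLeft_apply, Equiv.piCongrLeft'_apply]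
  simpa only [he] using setIntegral_ball_comp_linearIsometryEquiv e (fun z => z j ^ 2) ε

variable [Nonempty ι]

theorem setIntegral_ball_coord_sq {ε : ℝ} (hε : 0 < ε) (i : ι) :
    ∫ z in ball (0 : EuclideanSpace ℝ ι) ε, z i ^ 2
      = ε ^ 2 / (Fintype.card ι + 2) * volume.real (ball (0 : EuclideanSpace ℝ ι) ε) := by
  have hsum : ∑ j : ι, ∫ z in ball (0 : EuclideanSpace ℝ ι) ε, z j ^ 2
      = ∫ z in ball (0 : EuclideanSpace ℝ ι) ε, ‖z‖ ^ 2 := by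
    simp_rw [EuclideanSpace.real_norm_sq_eq]
    refine (integral_finsetSum _ fun j _ => ?_).symm
    exact Continuous.integrableOn_ball (by fun_prop) 0 ε
  simp_rw [setIntegral_ball_coord_sq_eq _ i, Finset.sum_const, Finset.card_univ, nsmul_eq_mul,
    setIntegral_ball_norm_sq volume hε, finrank_euclideanSpace] at hsum
  have hcard : (0 : ℝ) < Fintype.card ι := by exact_mod_cast Fintype.card_pos
  field_simp at hsum ⊢
  linarith

theorem setIntegral_ball_quadratic_form {ε : ℝ} (hε : 0 < ε) (A : Matrix ι ι ℝ) :
    ∫ z in ball (0 : EuclideanSpace ℝ ι) ε, ∑ i, ∑ j, z i * A i j * z j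
      = ε ^ 2 / (Fintype.card ι + 2) * volume.real (ball (0 : EuclideanSpace ℝ ι) ε)
        * A.trace := by
  have hint : ∀ i j, Integrable (fun z : EuclideanSpace ℝ ι => z i * A i j * z j)
      (volume.restrict (ball 0 ε)) := fun i j =>
    Continuous.integrableOn_ball (by fun_prop) 0 ε
  have hrow : ∀ i, ∫ z in ball (0 : EuclideanSpace ℝ ι) ε, ∑ j, z i * A i j * z j
      = A i i * (ε ^ 2 / (Fintype.card ι + 2)
        * volume.real (ball (0 : EuclideanSpace ℝ ι) ε)) := by
    intro i
    classical
    rw [integral_finsetSum _ fun j _ => hint i j, Finset.sum_eq_single i]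
    · simp_rw [mul_comm _ (A i i), mul_assoc, ← sq, integral_const_mul,
        setIntegral_ball_coord_sq hε]
    · intro j _ hji
      simp_rw [mul_comm _ (A i j), mul_assoc, integral_const_mul,
        setIntegral_ball_coord_mul_coord_of_ne (Ne.symm hji), mul_zero]
    · simp
  rw [integral_finsetSum _ fun i _ => integrable_finsetSum _ fun j _ => hint i j]
  simp_rw [hrow, ← Finset.sum_mul, Matrix.trace, Matrix.diag]
  ring

end EuclideanMoments

section QuadraticPolynomial

variable {ι : Type*} [Fintype ι] (A : Matrix ι ι ℝ) (b : ι → ℝ) (c : ℝ)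
  {φ : EuclideanSpace ℝ ι → ℝ}
  (hφ : ∀ y : EuclideanSpace ℝ ι,
    φ y = c + (∑ i, b i * y i) + (1 / 2) * ∑ i, ∑ j, y i * A i j * y j)
include hφ

theorem quadratic_add_add_sub (x z : EuclideanSpace ℝ ι) :
    φ (x + z) + φ (x - z) = 2 * φ x + ∑ i, ∑ j, z i * A i j * z j := by
  simp only [hφ, PiLp.add_apply, PiLp.sub_apply, add_mul, mul_add, sub_mul, mul_sub,
    Finset.sum_add_distrib, Finset.sum_sub_distrib]
  ring

theorem quadratic_two_point_average (x ξ : EuclideanSpace ℝ ι) (ε : ℝ) :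
    (φ (x + ε • ξ) + φ (x - ε • ξ)) / 2 = φ x + ε ^ 2 / 2 * ∑ i, ∑ j, ξ i * A i j * ξ j := by
  rw [quadratic_add_add_sub A b c hφ, add_div, Finset.mul_sum]
  congr 1
  · ring
  · simp only [PiLp.smul_apply, smul_eq_mul, Finset.sum_div, Finset.mul_sum]
    exact Finset.sum_congr rfl fun i _ => Finset.sum_congr rfl fun j _ => by ring

theorem quadratic_setAverage_ball [Nonempty ι] (x : EuclideanSpace ℝ ι) {ε : ℝ} (hε : 0 < ε) :
    ⨍ y in ball x ε, φ y = φ x + ε ^ 2 / (2 * (Fintype.card ι + 2)) * A.trace := by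
  have hcont : Continuous φ := by
    rw [funext hφ]
    fun_prop
  have hsymm : ∫ z in ball 0 ε, φ (x + z) = ∫ z in ball 0 ε, φ (x - z) := by
    simpa [sub_eq_add_neg] using (setIntegral_ball_comp_linearIsometryEquiv
      (LinearIsometryEquiv.neg ℝ) (fun z => φ (x + z)) ε).symm
  have heven : 2 * ∫ z in ball 0 ε, φ (x + z)
      = ∫ z in ball (0 : EuclideanSpace ℝ ι) ε, (2 * φ x + ∑ i, ∑ j, z i * A i j * z j) := by
    simp_rw [← quadratic_add_add_sub A b c hφ]
    rw [integral_add (Continuous.integrableOn_ball (by fun_prop) 0 ε)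
      (Continuous.integrableOn_ball (by fun_prop) 0 ε), ← hsymm]
    ring
  have hvol : volume.real (ball (0 : EuclideanSpace ℝ ι) ε) ≠ 0 :=
    (ENNReal.toReal_pos (measure_ball_pos _ _ hε).ne' measure_ball_lt_top.ne).ne'
  rw [integral_add (Continuous.integrableOn_ball continuous_const 0 ε)
    (Continuous.integrableOn_ball (by fun_prop) 0 ε), setIntegral_const,
    setIntegral_ball_quadratic_form hε, smul_eq_mul] at heven
  have hI : ∫ z in ball 0 ε, φ (x + z)
      = volume.real (ball (0 : EuclideanSpace ℝ ι) ε)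
        * (φ x + ε ^ 2 / (2 * (Fintype.card ι + 2)) * A.trace) := by
    rw [mul_comm 2, ← div_div]
    linear_combination heven / 2
  rw [setAverage_ball_eq_setAverage_ball_zero, setAverage_eq, smul_eq_mul, hI,
    inv_mul_cancel_left₀ hvol]

end QuadraticPolynomial

section MeanValueOperator

variable [NeZero N] (A : Matrix (Fin N) (Fin N) ℝ) (b : Fin N → ℝ) (c : ℝ) {φ : EucN N → ℝ}
  (hφ : ∀ y : EucN N, φ y = c + (∑ i, b i * y i) + (1 / 2) * ∑ i, ∑ j, y i * A i j * y j)
include hφ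

theorem mveOp_quadratic {ε : ℝ} (hε : 0 < ε) (q : ℝ) (ξ x : EucN N) :
    mveOp q ε φ ξ x = φ x + q * (ε ^ 2 / (2 * (N + 2)) * A.trace)
      + (1 - q) * ε ^ 2 / 2 * ∑ i, ∑ j, ξ i * A i j * ξ j := by
  rw [mveOp, quadratic_setAverage_ball A b c hφ x hε, quadratic_two_point_average A b c hφ,
    Fintype.card_fin]
  ring

theorem mvOp_quadratic {ε : ℝ} (hε : 0 < ε) {q : ℝ} (hq : q ≤ 1) (x : EucN N) :
    mvOp q ε φ x = φ x + q * (ε ^ 2 / (2 * (N + 2)) * A.trace)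
      + (1 - q) * ε ^ 2 / 2 * lamMax A := by
  have : Nonempty (sphere (0 : EucN N) 1) :=
    (NormedSpace.sphere_nonempty.mpr zero_le_one).to_subtype
  have hbdd : BddAbove (range fun ξ : sphere (0 : EucN N) 1 =>
      ∑ i, ∑ j, (ξ : EucN N) i * A i j * (ξ : EucN N) j) :=
    (isCompact_range (by fun_prop)).bddAbove
  have hmono : Monotone fun t => φ x + q * (ε ^ 2 / (2 * (N + 2)) * A.trace)
      + (1 - q) * ε ^ 2 / 2 * t := fun s t hst => by
    have : 0 ≤ (1 - q) * ε ^ 2 / 2 := by have := sub_nonneg.mpr hq; positivity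
    simpa using mul_le_mul_of_nonneg_left hst this
  simp only [mvOp, lamMax, mveOp_quadratic A b c hφ hε]
  exact (hmono.map_ciSup_of_continuousAt (by fun_prop) hbdd).symm

end MeanValueOperator

theorem quadratic_identity_general (hN : 2 ≤ N) (p q ε : ℝ) (hp : 2 ≤ p)
    (hq : q = ((N : ℝ) + 2) / ((N : ℝ) + p)) (hε : 0 < ε)
    (A : Matrix (Fin N) (Fin N) ℝ) (b : Fin N → ℝ) (c : ℝ)
    (φ : EucN N → ℝ)
    (hφ : ∀ y : EucN N,
      φ y = c + (∑ i, b i * y i) + (1 / 2) * ∑ i, ∑ j, y i * A i j * y j)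
    (x : EucN N) :
    2 * ((N : ℝ) + p) * (mvOp q ε φ x - φ x)
      = ε ^ 2 * (Matrix.trace A + (p - 2) * lamMax A) := by
  have : NeZero N := ⟨by omega⟩
  have hNp : 0 < (N : ℝ) + p := by positivity
  have hq1 : q ≤ 1 := by
    rw [hq, div_le_one hNp]
    linarith
  rw [mvOp_quadratic A b c hφ hε hq1, hq]
  field_simp
  ring

/-- for a quadratic polynomial `φ(y) = c + bᵀy + ½ yᵀAy` (`A` symmetric),
`2(N+p) (M^ε φ(x) - φ(x)) = ε² (tr A + (p-2) λ_max(A)) = ε² D_p φ`. -/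
theorem quadratic_identity (hN : 2 ≤ N) (p q ε : ℝ) (hp : 2 ≤ p)
    (hq : q = ((N : ℝ) + 2) / ((N : ℝ) + p)) (hε : 0 < ε)
    (A : Matrix (Fin N) (Fin N) ℝ) (hA : A.IsSymm) (b : Fin N → ℝ) (c : ℝ)
    (φ : EucN N → ℝ)
    (hφ : ∀ y : EucN N,
      φ y = c + (∑ i, b i * y i) + (1 / 2) * ∑ i, ∑ j, y i * A i j * y j)
    (x : EucN N) :
    2 * ((N : ℝ) + p) * (mvOp q ε φ x - φ x)
      = ε ^ 2 * (Matrix.trace A + (p - 2) * lamMax A) :=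
  quadratic_identity_general hN p q ε hp hq hε A b c φ hφ x

end
end

section
/- If v : Ω_ε → ℝ is bounded and lower semicontinuous on Ω_ε, then M^ε v is bounded and lower semicontinuous on closure(Ω). -/
open MeasureTheory Metric Set
open scoped ENNReal NNReal Classical

noncomputable section

variable {N : ℕ}

/-- `Ω_ε = {x : dist(x,Ω) ≤ ε}`. -/
def Oeps (Ω : Set (EucN N)) (ε : ℝ) : Set (EucN N) := {x | Metric.infDist x Ω ≤ ε}

open Filter

/-!
The ball average `x ↦ ⨍_{B_ε(x)} v` is continuous in `x`: extended by zero off `Ω_ε`, `v` is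
locally integrable, and the indicators of `B_ε(x')` converge to that of `B_ε(x)` off the null
sphere `∂B_ε(x)`, so dominated convergence applies. The values `v (x ± εξ)` are lower
semicontinuous on `closure Ω` as translates of `v`, because `x ± εξ` stays in `Ω_ε`. As
`1 - q ≥ 0`, each directional operator `M^ε_ξ v` is then lower semicontinuous, and so is their
supremum `M^ε v`, the family being uniformly bounded by the bound of `v`.
-/

theorem LowerSemicontinuousOn.aemeasurable_restrict {α : Type*} [TopologicalSpace α]
    [MeasurableSpace α] [OpensMeasurableSpace α] {μ : Measure α} {f : α → ℝ} {s : Set α}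
    (hf : LowerSemicontinuousOn f s) (hs : MeasurableSet s) : AEMeasurable f (μ.restrict s) :=
  aemeasurable_restrict_of_measurable_subtype hs (lowerSemicontinuous_restrict_iff.2 hf).measurable

theorem norm_setAverage_le_of_forall_norm_le {α E : Type*} [MeasurableSpace α] {μ : Measure α}
    [NormedAddCommGroup E] [NormedSpace ℝ E] {s : Set α} {f : α → E} {C : ℝ} (hs : μ s < ∞)
    (hC : 0 ≤ C) (hf : ∀ x ∈ s, ‖f x‖ ≤ C) : ‖⨍ x in s, f x ∂μ‖ ≤ C := by
  rw [setAverage_eq, norm_smul, Real.norm_of_nonneg (inv_nonneg.2 measureReal_nonneg)]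
  rcases eq_or_ne (μ.real s) 0 with h | h
  · simpa [h] using hC
  · calc (μ.real s)⁻¹ * ‖∫ x in s, f x ∂μ‖ ≤ (μ.real s)⁻¹ * (C * μ.real s) := by
          gcongr; exact norm_setIntegral_le_of_norm_le_const hs hf
      _ = C := by field_simp

section BallAverage

variable {E : Type*} [NormedAddCommGroup E] [NormedSpace ℝ E] [FiniteDimensional ℝ E]
  [Nontrivial E] [MeasurableSpace E] [BorelSpace E] {μ : Measure E} [μ.IsAddHaarMeasure]

theorem continuous_setIntegral_ball {f : E → ℝ} (hf : LocallyIntegrable f μ) (r : ℝ) :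
    Continuous fun x => ∫ y in ball x r, f y ∂μ := by
  refine continuous_iff_continuousAt.2 fun x₀ => ?_
  simp_rw [← integral_indicator measurableSet_ball]
  refine continuousAt_of_dominated (bound := (closedBall x₀ (r + 1)).indicator fun y => ‖f y‖)
    (Eventually.of_forall fun x => hf.aestronglyMeasurable.indicator measurableSet_ball) ?_
    (IntegrableOn.integrable_indicator (hf.integrableOn_isCompact (isCompact_closedBall x₀ _)).norm
      measurableSet_closedBall) ?_
  · filter_upwards [ball_mem_nhds x₀ one_pos] with x hx
    refine ae_of_all _ fun y => ?_
    rw [norm_indicator_eq_indicator_norm]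
    refine indicator_le_indicator_of_subset (fun y hy => ?_) (fun _ => norm_nonneg _) y
    rw [mem_ball] at hx hy
    rw [mem_closedBall]
    linarith [dist_triangle y x x₀]
  · filter_upwards [measure_eq_zero_iff_ae_notMem.1 (μ.addHaar_sphere x₀ r)] with y hy
    have hdist : ContinuousAt (fun x => dist y x) x₀ :=
      (continuous_const.dist continuous_id).continuousAt
    rcases lt_or_gt_of_ne (show dist y x₀ ≠ r from hy) with h | h
    · refine continuousAt_const.congr (f := fun _ => f y) ?_
      filter_upwards [hdist.eventually_lt continuousAt_const h] with x hx
      exact (indicator_of_mem (mem_ball.2 hx) f).symm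
    · refine continuousAt_const.congr (f := fun _ => 0) ?_
      filter_upwards [continuousAt_const.eventually_lt hdist h] with x hx
      exact (indicator_of_notMem (fun hy => (mem_ball.1 hy).not_gt hx) f).symm

theorem continuous_setAverage_ball {f : E → ℝ} (hf : LocallyIntegrable f μ) (r : ℝ) :
    Continuous fun x => ⨍ y in ball x r, f y ∂μ := by
  simp_rw [setAverage_eq, μ.addHaar_real_ball_center]
  exact (continuous_setIntegral_ball hf r).const_smul (μ.real (ball 0 r))⁻¹

theorem continuousOn_setAverage_ball {f : E → ℝ} {s T : Set E} {r C : ℝ} (hT : MeasurableSet T)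
    (hfm : AEMeasurable f (μ.restrict T)) (hfC : ∀ y ∈ T, |f y| ≤ C)
    (hsT : ∀ x ∈ s, ball x r ⊆ T) : ContinuousOn (fun x => ⨍ y in ball x r, f y ∂μ) s := by
  have hloc : LocallyIntegrable (T.indicator f) μ :=
    (locallyIntegrable_const C).mono ((aemeasurable_indicator_iff hT).2 hfm).aestronglyMeasurable
      (ae_of_all _ fun y => by
        rw [norm_indicator_eq_indicator_norm]
        exact indicator_apply_le' (fun hy => (hfC y hy).trans (le_abs_self C))
          fun _ => norm_nonneg C)
  refine (continuous_setAverage_ball hloc r).continuousOn.congr fun x hx => ?_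
  exact setAverage_congr_fun measurableSet_ball
    (ae_of_all _ fun y hy => (indicator_of_mem (hsT x hx hy) f).symm)

end BallAverage

theorem closedBall_subset_Oeps {Ω : Set (EucN N)} {x : EucN N} (hx : x ∈ closure Ω) (ε : ℝ) :
    closedBall x ε ⊆ Oeps Ω ε := fun y hy =>
  calc infDist y Ω ≤ infDist x Ω + dist y x := infDist_le_infDist_add_dist
    _ = dist y x := by rw [infDist_zero_of_mem_closure hx, zero_add]
    _ ≤ ε := hy

theorem add_smul_mem_closedBall {E : Type*} [NormedAddCommGroup E] [NormedSpace ℝ E] (x : E)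
    {ε : ℝ} (hε : 0 ≤ ε) {ξ : E} (hξ : ξ ∈ sphere 0 1) : x + ε • ξ ∈ closedBall x ε := by
  rw [mem_closedBall_iff_norm, add_sub_cancel_left, norm_smul, mem_sphere_zero_iff_norm.1 hξ,
    Real.norm_of_nonneg hε, mul_one]

theorem sub_smul_mem_closedBall {E : Type*} [NormedAddCommGroup E] [NormedSpace ℝ E] (x : E)
    {ε : ℝ} (hε : 0 ≤ ε) {ξ : E} (hξ : ξ ∈ sphere 0 1) : x - ε • ξ ∈ closedBall x ε := by
  rw [sub_eq_add_neg, ← smul_neg]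
  exact add_smul_mem_closedBall x hε (by simpa using hξ)

theorem abs_mveOp_le {q ε C : ℝ} {v : EucN N → ℝ} {x ξ : EucN N} (hq0 : 0 ≤ q) (hq1 : q ≤ 1)
    (hε : 0 ≤ ε) (hv : ∀ y ∈ closedBall x ε, |v y| ≤ C) (hξ : ξ ∈ sphere 0 1) :
    |mveOp q ε v ξ x| ≤ C := by
  have hC : 0 ≤ C := (abs_nonneg _).trans (hv x (mem_closedBall_self hε))
  have havg : |⨍ y in ball x ε, v y| ≤ C :=
    norm_setAverage_le_of_forall_norm_le (μ := volume) (f := v) measure_ball_lt_top hC fun y hy =>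
      hv y (ball_subset_closedBall hy)
  replace havg := abs_le.1 havg
  have hplus := abs_le.1 (hv _ (add_smul_mem_closedBall x hε hξ))
  have hminus := abs_le.1 (hv _ (sub_smul_mem_closedBall x hε hξ))
  rw [mveOp, abs_le]
  constructor <;>
    nlinarith [mul_le_mul_of_nonneg_left havg.1 hq0, mul_le_mul_of_nonneg_left havg.2 hq0]

theorem abs_mvOp_le [Nontrivial (EucN N)] {q ε C : ℝ} {v : EucN N → ℝ} {x : EucN N}
    (hmve : ∀ ξ ∈ sphere (0 : EucN N) 1, |mveOp q ε v ξ x| ≤ C) : |mvOp q ε v x| ≤ C := by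
  have hne : Nonempty (sphere (0 : EucN N) 1) :=
    (NormedSpace.sphere_nonempty.2 zero_le_one).to_subtype
  have hbdd : BddAbove (range fun ξ : sphere (0 : EucN N) 1 => mveOp q ε v ξ x) :=
    ⟨C, forall_mem_range.2 fun ξ => (abs_le.1 (hmve ξ ξ.2)).2⟩
  exact abs_le.2 ⟨(abs_le.1 (hmve _ hne.some.2)).1.trans (le_ciSup hbdd hne.some),
    ciSup_le fun ξ => (abs_le.1 (hmve ξ ξ.2)).2⟩

theorem lowerSemicontinuousWithinAt_mveOp {q ε : ℝ} {v : EucN N → ℝ} {ξ x : EucN N}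
    {s : Set (EucN N)} (hq1 : q ≤ 1)
    (havg : ContinuousWithinAt (fun z => ⨍ y in ball z ε, v y) s x)
    (hplus : LowerSemicontinuousWithinAt (fun z => v (z + ε • ξ)) s x)
    (hminus : LowerSemicontinuousWithinAt (fun z => v (z - ε • ξ)) s x) :
    LowerSemicontinuousWithinAt (mveOp q ε v ξ) s x := by
  have hmono : Monotone fun t : ℝ => (1 - q) * (t / 2) := fun a b hab => by
    dsimp only
    gcongr
  exact (continuousWithinAt_const.mul havg).lowerSemicontinuousWithinAt.add
    ((continuous_const.mul (continuous_id.div_const 2)).continuousAt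
      |>.comp_lowerSemicontinuousWithinAt (hplus.add hminus) hmono)

theorem mvOp_lowerSemicontinuous_general (hN : 2 ≤ N) (p q ε : ℝ) (hp : 2 ≤ p)
    (hq : q = ((N : ℝ) + 2) / ((N : ℝ) + p)) (hε : 0 < ε)
    (Ω : Set (EucN N))
    (v : EucN N → ℝ) (hvb : ∃ C, ∀ x ∈ Oeps Ω ε, |v x| ≤ C)
    (hvlsc : LowerSemicontinuousOn v (Oeps Ω ε)) :
    (∃ C, ∀ x ∈ closure Ω, |mvOp q ε v x| ≤ C) ∧
      LowerSemicontinuousOn (mvOp q ε v) (closure Ω) := by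
  have : Nonempty (Fin N) := ⟨⟨0, by omega⟩⟩
  obtain ⟨C, hC⟩ := hvb
  have hq0 : 0 ≤ q := hq ▸ by positivity
  have hq1 : q ≤ 1 := by rw [hq, div_le_one (by positivity)]; linarith
  have hOeps : MeasurableSet (Oeps Ω ε) :=
    (isClosed_le (continuous_infDist_pt Ω) continuous_const).measurableSet
  have hmve : ∀ x ∈ closure Ω, ∀ ξ ∈ sphere (0 : EucN N) 1, |mveOp q ε v ξ x| ≤ C :=
    fun x hx ξ hξ =>
      abs_mveOp_le hq0 hq1 hε.le (fun y hy => hC y (closedBall_subset_Oeps hx ε hy)) hξ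
  have havg : ContinuousOn (fun x => ⨍ y in ball x ε, v y) (closure Ω) :=
    continuousOn_setAverage_ball hOeps (hvlsc.aemeasurable_restrict hOeps) hC
      fun x hx => ball_subset_closedBall.trans (closedBall_subset_Oeps hx ε)
  have hshift : ∀ x ∈ closure Ω, ∀ g : EucN N → EucN N, Continuous g →
      (∀ z ∈ closure Ω, g z ∈ closedBall z ε) →
      LowerSemicontinuousWithinAt (v ∘ g) (closure Ω) x := fun x hx g hg hgε =>
    (hvlsc _ (closedBall_subset_Oeps hx ε (hgε x hx))).comp hg.continuousWithinAt
      fun z hz => closedBall_subset_Oeps hz ε (hgε z hz)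
  refine ⟨⟨C, fun x hx => abs_mvOp_le (hmve x hx)⟩, fun x hx => ?_⟩
  refine lowerSemicontinuousWithinAt_ciSup ?_ fun ξ =>
    lowerSemicontinuousWithinAt_mveOp hq1 (havg x hx) ?_ ?_
  · filter_upwards [self_mem_nhdsWithin] with z hz
    exact ⟨C, forall_mem_range.2 fun ξ => (abs_le.1 (hmve z hz ξ ξ.2)).2⟩
  · exact hshift x hx _ (continuous_add_const _) fun z _ => add_smul_mem_closedBall z hε.le ξ.2
  · exact hshift x hx _ (continuous_sub_right _) fun z _ => sub_smul_mem_closedBall z hε.le ξ.2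

/-- if `v` is bounded and lower semicontinuous on `Ω_ε`, then `M^ε v` is
bounded and lower semicontinuous on `closure Ω`. -/
theorem mvOp_lowerSemicontinuous (hN : 2 ≤ N) (p q ε : ℝ) (hp : 2 ≤ p)
    (hq : q = ((N : ℝ) + 2) / ((N : ℝ) + p)) (hε : 0 < ε)
    (Ω : Set (EucN N)) (hΩo : IsOpen Ω) (hΩb : Bornology.IsBounded Ω)
    (v : EucN N → ℝ) (hvb : ∃ C, ∀ x ∈ Oeps Ω ε, |v x| ≤ C)
    (hvlsc : LowerSemicontinuousOn v (Oeps Ω ε)) :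
    (∃ C, ∀ x ∈ closure Ω, |mvOp q ε v x| ≤ C) ∧
      LowerSemicontinuousOn (mvOp q ε v) (closure Ω) :=
  mvOp_lowerSemicontinuous_general hN p q ε hp hq hε Ω v hvb hvlsc
end
end
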